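/- Let A ⊂ ℝ be compact, ν a positive Borel measure whose support is contained in A and contains infinitely many points, and 2 ≤ p < ∞. Let U ⊂ ℝ be an open interval, let ω : A × U → (0, ∞) be continuous with ∂ω/∂t existing and continuous, let ȷ : U → (0, ∞) and y : U → ℝ be continuously differentiable, and set dμ(x,t) := ω(x,t) dν(x) + ȷ(t) δ_{y(t)}. Fix distinct reals x₀,…,x_n none equal to y(t), set P_{n+1}(x) := ∏_j (x − x_j), and f_k(𝐱,t) := ∫ |P_{n+1}(x)|^p/(x − x_k) dμ(x,t). Then f_k is partially differentiable in t with ∂f_k/∂t (𝐱,t) = ∫ (|P_{n+1}(x)|^p/(x − x_k)) (∂ω/∂t)(x,t) dν(x) + (ȷ′(t) + ȷ(t) y′(t) R(t)) · |P_{n+1}(y(t))|^p/(y(t) − x_k), where R(t) := Σ_{j=0}^{n} (p − δ_{j,k})/(y(t) − x_j) and δ_{j,k} is the Kronecker delta. -/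

import Mathlib

open MeasureTheory Polynomial Finset
open Filter Topology

/-! Off the nodes `x_j` the integrand is `|P(s)|^p / (s - x_k)`, whose logarithmic derivative is
`∑_j (p - δ_{jk}) / (s - x_j)`; everywhere it is built from `u ↦ |u|^(p-1) sign u = u |u|^(p-2)`,
which is continuous for `p ≥ 2`. Against the absolutely continuous part of `μ(t)` we differentiate
under the integral sign, dominating by a bound of `∂ω/∂t` on the compact set `A × [t - ε, t + ε]`;
the atom `J(t) δ_{y(t)}` contributes `J(t) g(y(t))`, differentiated by the product and chain rules. -/

/-- The (topological) support of a Borel measure on `ℝ`. -/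
def measureSupport (μ : Measure ℝ) : Set ℝ :=
  {x : ℝ | ∀ U : Set ℝ, IsOpen U → x ∈ U → μ U ≠ 0}

theorem measureSupport_eq_support (μ : Measure ℝ) : measureSupport μ = μ.support := by
  simp [Measure.support_eq_forall_isOpen, measureSupport, pos_iff_ne_zero, imp.swap]

theorem ae_mem_of_measureSupport_subset {μ : Measure ℝ} {A : Set ℝ}
    (h : measureSupport μ ⊆ A) : ∀ᵐ s ∂μ, s ∈ A :=
  measure_mono_null (Set.compl_subset_compl.2 (measureSupport_eq_support μ ▸ h))
    Measure.measure_compl_support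

theorem abs_rpow_sub_one_mul_sign (p : ℝ) (u : ℝ) :
    |u| ^ (p - 1) * Real.sign u = u * |u| ^ (p - 2) := by
  rcases lt_trichotomy u 0 with hu | rfl | hu
  · rw [Real.sign_of_neg hu, show p - 1 = p - 2 + 1 by ring,
      Real.rpow_add_one (abs_pos.2 hu.ne).ne', abs_of_neg hu]
    ring
  · simp [Real.sign_zero]
  · rw [Real.sign_of_pos hu, show p - 1 = p - 2 + 1 by ring,
      Real.rpow_add_one (abs_pos.2 hu.ne').ne', abs_of_pos hu]
    ring

theorem abs_rpow_sub_one_mul_sign_of_ne_zero (p : ℝ) {u : ℝ} (hu : u ≠ 0) :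
    |u| ^ (p - 1) * Real.sign u = |u| ^ p / u := by
  rw [Real.rpow_sub_one (abs_ne_zero.2 hu)]
  rcases hu.lt_or_gt with hu | hu
  · rw [Real.sign_of_neg hu, abs_of_neg hu]
    field_simp
  · rw [Real.sign_of_pos hu, abs_of_pos hu]
    field_simp

theorem continuous_abs_rpow_sub_one_mul_sign {p : ℝ} (hp : 2 ≤ p) :
    Continuous fun u : ℝ => |u| ^ (p - 1) * Real.sign u := by
  simp_rw [abs_rpow_sub_one_mul_sign]
  exact continuous_id.mul ((Real.continuous_rpow_const (by linarith)).comp continuous_abs)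

theorem HasDerivAt.abs_rpow {h : ℝ → ℝ} {h' v : ℝ} (hh : HasDerivAt h h' v) (hv : h v ≠ 0)
    (p : ℝ) : HasDerivAt (fun s => |h s| ^ p) (p * (|h v| ^ p / h v) * h') v := by
  refine ((Real.hasDerivAt_rpow_const (p := p) (Or.inl (abs_ne_zero.2 hv))).comp v
    ((hasDerivAt_abs hv).comp v hh)).congr_deriv ?_
  rw [← abs_rpow_sub_one_mul_sign_of_ne_zero p hv]
  rcases hv.lt_or_gt with h | h <;> simp [Real.sign_of_neg, Real.sign_of_pos, h]

theorem hasDerivAt_prod_sub {ι : Type*} (s : Finset ι) (x : ι → ℝ) {v : ℝ}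
    (hv : ∀ j ∈ s, v ≠ x j) :
    HasDerivAt (fun u => ∏ j ∈ s, (u - x j)) ((∏ j ∈ s, (v - x j)) * ∑ j ∈ s, (v - x j)⁻¹) v := by
  classical
  refine (HasDerivAt.fun_finsetProd (u := s)
    (fun j _ => (hasDerivAt_id v).sub_const (x j))).congr_deriv ?_
  rw [mul_sum]
  refine sum_congr rfl fun j hj => ?_
  rw [← mul_prod_erase s _ hj, smul_eq_mul, mul_one, mul_right_comm,
    mul_inv_cancel₀ (sub_ne_zero.2 (hv j hj)), one_mul]
  rfl

section NodalIntegrand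

variable {ι : Type*} [Fintype ι] [DecidableEq ι]

/-- The paper's `|P_{n+1}(s)|^p / (s - x_k)`, in its everywhere-defined form. -/
noncomputable def nodalIntegrand (p : ℝ) (x : ι → ℝ) (k : ι) (s : ℝ) : ℝ :=
  (∏ i ∈ univ.erase k, (s - x i)) * |s - x k| ^ (p - 1) * Real.sign (s - x k)
    * |∏ i ∈ univ.erase k, (s - x i)| ^ (p - 1) * Real.sign (∏ i ∈ univ.erase k, (s - x i))

theorem continuous_nodalIntegrand {p : ℝ} (hp : 2 ≤ p) (x : ι → ℝ) (k : ι) :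
    Continuous (nodalIntegrand p x k) := by
  have hQ : Continuous fun s : ℝ => ∏ i ∈ univ.erase k, (s - x i) := by fun_prop
  have hφ := continuous_abs_rpow_sub_one_mul_sign hp
  refine (hQ.mul ((hφ.comp (continuous_sub_right (x k))).mul (hφ.comp hQ))).congr fun s => ?_
  simp only [nodalIntegrand, Pi.mul_apply, Function.comp_apply]
  ring

theorem nodalIntegrand_eq_abs_prod_rpow_div {p : ℝ} {x : ι → ℝ} {k : ι} {s : ℝ}
    (hs : ∀ j, s ≠ x j) :
    nodalIntegrand p x k s = |∏ j, (s - x j)| ^ p / (s - x k) := by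
  have hk : s - x k ≠ 0 := sub_ne_zero.2 (hs k)
  have hQ : ∏ i ∈ univ.erase k, (s - x i) ≠ 0 :=
    prod_ne_zero_iff.2 fun i _ => sub_ne_zero.2 (hs i)
  rw [← mul_prod_erase univ _ (mem_univ k), abs_mul, Real.mul_rpow (abs_nonneg _) (abs_nonneg _),
    nodalIntegrand, mul_assoc _ (|s - x k| ^ (p - 1)), abs_rpow_sub_one_mul_sign_of_ne_zero p hk,
    mul_assoc, abs_rpow_sub_one_mul_sign_of_ne_zero p hQ]
  field_simp

theorem sum_sub_ite_div (p : ℝ) (a : ι → ℝ) (k : ι) :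
    ∑ j, (p - if j = k then (1 : ℝ) else 0) / a j = p * ∑ j, (a j)⁻¹ - (a k)⁻¹ := by
  simp_rw [sub_div, sum_sub_distrib, div_eq_mul_inv, mul_sum, ite_mul, one_mul, zero_mul,
    sum_ite_eq', if_pos (mem_univ k)]

theorem hasDerivAt_nodalIntegrand (p : ℝ) {x : ι → ℝ} (k : ι) {v : ℝ} (hv : ∀ j, v ≠ x j) :
    HasDerivAt (nodalIntegrand p x k)
      ((∑ j, (p - if j = k then (1 : ℝ) else 0) / (v - x j))
        * (|∏ j, (v - x j)| ^ p / (v - x k))) v := by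
  have hP : ∏ j, (v - x j) ≠ 0 := prod_ne_zero_iff.2 fun j _ => sub_ne_zero.2 (hv j)
  have hk : v - x k ≠ 0 := sub_ne_zero.2 (hv k)
  have hnodes : ∀ᶠ s in 𝓝 v, ∀ j, s ≠ x j :=
    eventually_all.2 fun j => isOpen_ne.mem_nhds (hv j)
  have hquot := (((hasDerivAt_prod_sub univ x fun j _ => hv j).abs_rpow hP p).div
    ((hasDerivAt_id' v).sub_const (x k)) hk)
  refine (hquot.congr_of_eventuallyEq
    (hnodes.mono fun s hs => nodalIntegrand_eq_abs_prod_rpow_div hs)).congr_deriv ?_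
  rw [sum_sub_ite_div]
  field_simp

end NodalIntegrand

theorem integral_withDensity_ofReal_add_dirac {α : Type*} [MeasurableSpace α]
    [MeasurableSingletonClass α] {ν : Measure α} {w g : α → ℝ} (hw : ∀ᵐ s ∂ν, 0 ≤ w s)
    (hwm : AEMeasurable w ν) (hgw : Integrable (fun s => g s * w s) ν) {c : ℝ} (hc : 0 ≤ c)
    (a : α) :
    ∫ s, g s ∂(ν.withDensity (fun s => ENNReal.ofReal (w s)) + ENNReal.ofReal c • Measure.dirac a)
      = ∫ s, g s * w s ∂ν + c * g a := by
  have hmeas : AEMeasurable (fun s => ENNReal.ofReal (w s)) ν :=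
    ENNReal.measurable_ofReal.comp_aemeasurable hwm
  have hfin : ∀ᵐ s ∂ν, ENNReal.ofReal (w s) < ⊤ := ae_of_all _ fun _ => ENNReal.ofReal_lt_top
  have hdens : (fun s => (ENNReal.ofReal (w s)).toReal • g s) =ᵐ[ν] fun s => g s * w s := by
    filter_upwards [hw] with s hs
    rw [ENNReal.toReal_ofReal hs, smul_eq_mul, mul_comm]
  rw [integral_add_measure
      ((integrable_withDensity_iff_integrable_smul₀' hmeas hfin).2 (hgw.congr hdens.symm))
      ((integrable_dirac enorm_lt_top).smul_measure ENNReal.ofReal_ne_top),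
    integral_withDensity_eq_integral_toReal_smul₀ hmeas hfin, integral_congr_ae hdens,
    integral_smul_measure, integral_dirac, ENNReal.toReal_ofReal hc, smul_eq_mul]

section Leibniz

variable {α : Type*} [TopologicalSpace α] [T2Space α] [MeasurableSpace α] [OpensMeasurableSpace α]
  {ν : Measure α} [IsFiniteMeasure ν] {A : Set α}

theorem integrable_of_continuousOn_of_ae_mem (hA : IsCompact A) (hνA : ∀ᵐ s ∂ν, s ∈ A)
    {g : α → ℝ} (hg : ContinuousOn g A) : Integrable g ν :=
  Measure.restrict_eq_self_of_ae_mem hνA ▸ hg.integrableOn_compact hA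

theorem hasDerivAt_integral_of_continuousOn_prod (hA : IsCompact A) (hνA : ∀ᵐ s ∂ν, s ∈ A)
    {U : Set ℝ} (hU : IsOpen U) {F F' : α → ℝ → ℝ}
    (hF : ContinuousOn (fun q : α × ℝ => F q.1 q.2) (A ×ˢ U))
    (hF' : ContinuousOn (fun q : α × ℝ => F' q.1 q.2) (A ×ˢ U))
    (hderiv : ∀ s ∈ A, ∀ t ∈ U, HasDerivAt (F s) (F' s t) t) {t : ℝ} (ht : t ∈ U) :
    HasDerivAt (fun t => ∫ s, F s t ∂ν) (∫ s, F' s t ∂ν) t := by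
  obtain ⟨ε, hε, hball⟩ := Metric.nhds_basis_closedBall.mem_iff.1 (hU.mem_nhds ht)
  obtain ⟨M, hM⟩ := (hA.prod (isCompact_closedBall t ε)).exists_bound_of_continuousOn
    (hF'.mono (Set.prod_mono_right hball))
  have hFint : ∀ t' ∈ U, Integrable (F · t') ν := fun t' ht' =>
    integrable_of_continuousOn_of_ae_mem hA hνA (hF.uncurry_right t' ht')
  refine (hasDerivAt_integral_of_dominated_loc_of_deriv_le (F := fun t s => F s t)
    (F' := fun t s => F' s t) (bound := fun _ => M) (Metric.ball_mem_nhds t hε) ?_ (hFint t ht)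
    (integrable_of_continuousOn_of_ae_mem hA hνA (hF'.uncurry_right t ht)).aestronglyMeasurable
    ?_ (integrable_const M) ?_).2
  · filter_upwards [hU.mem_nhds ht] with t' ht' using (hFint t' ht').aestronglyMeasurable
  · filter_upwards [hνA] with s hs t' ht'
    exact hM (s, t') ⟨hs, Metric.ball_subset_closedBall ht'⟩
  · filter_upwards [hνA] with s hs t' ht'
    exact hderiv s hs t' (hball (Metric.ball_subset_closedBall ht'))

end Leibniz

theorem hasDerivAt_integral_withDensity_add_dirac {A : Set ℝ} (hA : IsCompact A)
    {ν : Measure ℝ} [IsFiniteMeasure ν] (hνA : ∀ᵐ s ∂ν, s ∈ A) {U : Set ℝ} (hU : IsOpen U)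
    {ω ωt : ℝ → ℝ → ℝ} (hω0 : ∀ x ∈ A, ∀ t ∈ U, 0 ≤ ω x t)
    (hω : ContinuousOn (fun q : ℝ × ℝ => ω q.1 q.2) (A ×ˢ U))
    (hωt : ∀ x ∈ A, ∀ t ∈ U, HasDerivAt (fun s => ω x s) (ωt x t) t)
    (hωt' : ContinuousOn (fun q : ℝ × ℝ => ωt q.1 q.2) (A ×ˢ U))
    {J J' y y' : ℝ → ℝ} (hJ0 : ∀ t ∈ U, 0 ≤ J t) (hJ : ∀ t ∈ U, HasDerivAt J (J' t) t)
    (hy : ∀ t ∈ U, HasDerivAt y (y' t) t) {g : ℝ → ℝ} (hg : ContinuousOn g A) {t g' : ℝ}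
    (ht : t ∈ U) (hg' : HasDerivAt g g' (y t)) :
    HasDerivAt (fun t => ∫ s, g s ∂(ν.withDensity (fun s => ENNReal.ofReal (ω s t))
        + ENNReal.ofReal (J t) • Measure.dirac (y t)))
      (∫ s, g s * ωt s t ∂ν + (J' t * g (y t) + J t * (g' * y' t))) t := by
  have hgA : ContinuousOn (fun q : ℝ × ℝ => g q.1) (A ×ˢ U) :=
    hg.comp continuousOn_fst fun _ hq => hq.1
  have hgω : ContinuousOn (fun q : ℝ × ℝ => g q.1 * ω q.1 q.2) (A ×ˢ U) := hgA.mul hω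
  have hsplit : (fun t => ∫ s, g s ∂(ν.withDensity (fun s => ENNReal.ofReal (ω s t))
      + ENNReal.ofReal (J t) • Measure.dirac (y t)))
        =ᶠ[𝓝 t] fun t => ∫ s, g s * ω s t ∂ν + J t * g (y t) := by
    filter_upwards [hU.mem_nhds ht] with t' ht'
    refine integral_withDensity_ofReal_add_dirac (hνA.mono fun s hs => hω0 s hs t' ht') ?_
      (integrable_of_continuousOn_of_ae_mem hA hνA
        (hgω.uncurry_right (f := fun s t => g s * ω s t) t' ht')) (hJ0 t' ht') _
    exact (integrable_of_continuousOn_of_ae_mem hA hνA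
      (hω.uncurry_right t' ht')).aestronglyMeasurable.aemeasurable
  have hdensity := hasDerivAt_integral_of_continuousOn_prod hA hνA hU hgω (hgA.mul hωt')
    (fun s hs t' ht' => (hωt s hs t' ht').const_mul (g s)) ht
  exact (hdensity.add ((hJ t ht).mul (hg'.comp t (hy t ht)))).congr_of_eventuallyEq hsplit

theorem partial_deriv_fk_t_general
    (A : Set ℝ) (hA : IsCompact A)
    (ν : Measure ℝ) [IsFiniteMeasure ν]
    (hνsupp : measureSupport ν ⊆ A)
    (p : ℝ) (hp2 : 2 ≤ p) (n : ℕ)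
    (U : Set ℝ) (hUopen : IsOpen U)
    (ω : ℝ → ℝ → ℝ) (ωt : ℝ → ℝ → ℝ)
    (hωpos : ∀ x ∈ A, ∀ t ∈ U, 0 < ω x t)
    (hωcont : ContinuousOn (fun q : ℝ × ℝ => ω q.1 q.2) (A ×ˢ U))
    (hωt : ∀ x ∈ A, ∀ t ∈ U, HasDerivAt (fun s => ω x s) (ωt x t) t)
    (hωtcont : ContinuousOn (fun q : ℝ × ℝ => ωt q.1 q.2) (A ×ˢ U))
    (J : ℝ → ℝ) (J' : ℝ → ℝ) (hJpos : ∀ t ∈ U, 0 < J t)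
    (hJ : ∀ t ∈ U, HasDerivAt J (J' t) t)
    (y : ℝ → ℝ) (y' : ℝ → ℝ)
    (hy : ∀ t ∈ U, HasDerivAt y (y' t) t)
    (μ : ℝ → Measure ℝ)
    (hμ : ∀ t, μ t = ν.withDensity (fun s => ENNReal.ofReal (ω s t))
      + (ENNReal.ofReal (J t)) • Measure.dirac (y t))
    (x : Fin (n + 1) → ℝ) (k : Fin (n + 1))
    (hxy : ∀ t ∈ U, ∀ j, x j ≠ y t)
    (f : (Fin (n + 1) → ℝ) → ℝ → ℝ)
    (hf : f = fun v t => ∫ s : ℝ,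
      (∏ i ∈ Finset.univ.erase k, (s - v i)) * |s - v k| ^ (p - 1) * Real.sign (s - v k)
        * |∏ i ∈ Finset.univ.erase k, (s - v i)| ^ (p - 1)
        * Real.sign (∏ i ∈ Finset.univ.erase k, (s - v i)) ∂(μ t)) :
    ∀ t ∈ U,
      HasDerivAt (fun s : ℝ => f x s)
        ((∫ s : ℝ,
            ((∏ i ∈ Finset.univ.erase k, (s - x i)) * |s - x k| ^ (p - 1)
              * Real.sign (s - x k) * |∏ i ∈ Finset.univ.erase k, (s - x i)| ^ (p - 1)
              * Real.sign (∏ i ∈ Finset.univ.erase k, (s - x i))) * ωt s t ∂ν)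
          + (J' t + J t * y' t
              * (∑ j, (p - if j = k then (1 : ℝ) else 0) / (y t - x j)))
            * (|∏ j, (y t - x j)| ^ p / (y t - x k))) t := by
  intro t ht
  have hyx : ∀ j, y t ≠ x j := fun j => (hxy t ht j).symm
  have hderiv := hasDerivAt_integral_withDensity_add_dirac hA
    (ae_mem_of_measureSupport_subset hνsupp) hUopen (fun s hs t ht => (hωpos s hs t ht).le)
    hωcont hωt hωtcont (fun t ht => (hJpos t ht).le) hJ hy
    (continuous_nodalIntegrand hp2 x k).continuousOn ht (hasDerivAt_nodalIntegrand p k hyx)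
  rw [nodalIntegrand_eq_abs_prod_rpow_div hyx] at hderiv
  subst hf
  simp only [hμ]
  exact hderiv.congr_deriv (by unfold nodalIntegrand; ring)

/-- For the family of measures `dμ(x,t) = ω(x,t) dν(x) + J(t) δ_{y(t)}`, fixed distinct
reals `x₀,…,x_n` none equal to `y(t)`, and
`f_k(𝐱,t) = ∫ |P_{n+1}(x)|^p/(x - x_k) dμ(x,t)` (the integrand interpreted as the
everywhere-defined product), `f_k` is partially differentiable in `t` with
`∂f_k/∂t = ∫ (|P_{n+1}(x)|^p/(x - x_k)) (∂ω/∂t)(x,t) dν(x)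
  + (J'(t) + J(t) y'(t) R(t)) · |P_{n+1}(y(t))|^p/(y(t) - x_k)`,
where `R(t) = Σ_{j=0}^{n} (p - δ_{j,k})/(y(t) - x_j)`. -/
theorem partial_deriv_fk_t
    (A : Set ℝ) (hA : IsCompact A)
    (ν : Measure ℝ) [IsFiniteMeasure ν]
    (hνsupp : measureSupport ν ⊆ A) (hνinf : (measureSupport ν).Infinite)
    (p : ℝ) (hp2 : 2 ≤ p) (n : ℕ)
    (U : Set ℝ) (hUopen : IsOpen U) (hUconn : U.OrdConnected)
    (ω : ℝ → ℝ → ℝ) (ωt : ℝ → ℝ → ℝ)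
    (hωpos : ∀ x ∈ A, ∀ t ∈ U, 0 < ω x t)
    (hωcont : ContinuousOn (fun q : ℝ × ℝ => ω q.1 q.2) (A ×ˢ U))
    (hωt : ∀ x ∈ A, ∀ t ∈ U, HasDerivAt (fun s => ω x s) (ωt x t) t)
    (hωtcont : ContinuousOn (fun q : ℝ × ℝ => ωt q.1 q.2) (A ×ˢ U))
    (J : ℝ → ℝ) (J' : ℝ → ℝ) (hJpos : ∀ t ∈ U, 0 < J t)
    (hJ : ∀ t ∈ U, HasDerivAt J (J' t) t) (hJ'cont : ContinuousOn J' U)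
    (y : ℝ → ℝ) (y' : ℝ → ℝ)
    (hy : ∀ t ∈ U, HasDerivAt y (y' t) t) (hy'cont : ContinuousOn y' U)
    (μ : ℝ → Measure ℝ)
    (hμ : ∀ t, μ t = ν.withDensity (fun s => ENNReal.ofReal (ω s t))
      + (ENNReal.ofReal (J t)) • Measure.dirac (y t))
    (x : Fin (n + 1) → ℝ) (hx : Function.Injective x) (k : Fin (n + 1))
    (hxy : ∀ t ∈ U, ∀ j, x j ≠ y t)
    (f : (Fin (n + 1) → ℝ) → ℝ → ℝ)
    (hf : f = fun v t => ∫ s : ℝ,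
      (∏ i ∈ Finset.univ.erase k, (s - v i)) * |s - v k| ^ (p - 1) * Real.sign (s - v k)
        * |∏ i ∈ Finset.univ.erase k, (s - v i)| ^ (p - 1)
        * Real.sign (∏ i ∈ Finset.univ.erase k, (s - v i)) ∂(μ t)) :
    ∀ t ∈ U,
      HasDerivAt (fun s : ℝ => f x s)
        ((∫ s : ℝ,
            ((∏ i ∈ Finset.univ.erase k, (s - x i)) * |s - x k| ^ (p - 1)
              * Real.sign (s - x k) * |∏ i ∈ Finset.univ.erase k, (s - x i)| ^ (p - 1)
              * Real.sign (∏ i ∈ Finset.univ.erase k, (s - x i))) * ωt s t ∂ν)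
          + (J' t + J t * y' t
              * (∑ j, (p - if j = k then (1 : ℝ) else 0) / (y t - x j)))
            * (|∏ j, (y t - x j)| ^ p / (y t - x k))) t :=
  partial_deriv_fk_t_general A hA ν hνsupp p hp2 n U hUopen ω ωt hωpos hωcont hωt hωtcont J J' hJpos
    hJ y y' hy μ hμ x k hxy f hf
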